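/- Let T be a skew-adjoint endomorphism of V with T(W) ⊆ W^⊥ and T(W^⊥) ⊆ W. Then for every X ∈ W, ⟨S_T, X⟩ = tr(T∘S_X). -/

import Mathlib

open scoped RealInnerProductSpace

/-- The endomorphism `S_X` of `V` associated to a second fundamental form `Π` and its
Weingarten operator `A`: `S_X(Z) = Π(X, P_W Z) - A_{P_{W^⊥} Z}(X)`. -/
noncomputable def Sop {V : Type*} [NormedAddCommGroup V] [InnerProductSpace ℝ V]
    [FiniteDimensional ℝ V] (W : Submodule ℝ V)
    (Pi : W →ₗ[ℝ] W →ₗ[ℝ] ↥Wᗮ) (A : ↥Wᗮ →ₗ[ℝ] W →ₗ[ℝ] W) (X : W) : V →ₗ[ℝ] V :=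
  Wᗮ.subtype ∘ₗ (Pi X) ∘ₗ (Submodule.orthogonalProjection W).toLinearMap
    - W.subtype ∘ₗ (A.flip X) ∘ₗ (Submodule.orthogonalProjection Wᗮ).toLinearMap

/-- The vector `S_T = ∑_A S_{e_A}(T e_A) - ∑_α S_{T e_α}(e_α)` associated to an
endomorphism `T` interchanging `W` and `Wᗮ` (for such `T`, `T e_α ∈ W`, realized here
via the orthogonal projection onto `W`). -/
noncomputable def STvec {V : Type*} [NormedAddCommGroup V] [InnerProductSpace ℝ V]
    [FiniteDimensional ℝ V] (W : Submodule ℝ V)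
    (Pi : W →ₗ[ℝ] W →ₗ[ℝ] ↥Wᗮ) (A : ↥Wᗮ →ₗ[ℝ] W →ₗ[ℝ] W)
    {ι κ : Type*} [Fintype ι] [Fintype κ]
    (eW : OrthonormalBasis ι ℝ ↥W) (eP : OrthonormalBasis κ ℝ ↥Wᗮ)
    (T : V →ₗ[ℝ] V) : V :=
  ∑ i, Sop W Pi A (eW i) (T ((eW i : V)))
    - ∑ j, Sop W Pi A (Submodule.orthogonalProjection W (T ((eP j : V)))) ((eP j : V))

/-!
Pairing with `X ∈ W` kills the `Wᗮ`-valued part of `S_Y`, so the Weingarten relation gives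
`⟪S_Y Z, X⟫ = -⟪Π(Y, X), Z⟫`. By the symmetry of `Π` and the skew-adjointness of `T`, each term of
`⟪S_T, X⟫` becomes a diagonal entry `⟪e, T (S_X e)⟫`, and these are exactly the terms of
`tr (T ∘ S_X)` computed in the orthonormal bases of `W` and `Wᗮ`, after using cyclicity of the trace
to move the orthogonal projections in `S_X` to the front.
-/

namespace Submodule

variable {𝕜 E ι : Type*} [RCLike 𝕜] [NormedAddCommGroup E] [InnerProductSpace 𝕜 E]
  [FiniteDimensional 𝕜 E] [Fintype ι]

theorem trace_comp_orthogonalProjectionOnto (K : Submodule 𝕜 E)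
    (b : OrthonormalBasis ι 𝕜 K) (f : K →ₗ[𝕜] E) :
    LinearMap.trace 𝕜 E (f ∘ₗ K.orthogonalProjectionOnto.toLinearMap) =
      ∑ i, inner 𝕜 (b i : E) (f (b i)) := by
  rw [LinearMap.trace_comp_comm', LinearMap.trace_eq_sum_inner _ b]
  simp

end Submodule

section SecondFundamentalForm

variable {V : Type*} [NormedAddCommGroup V] [InnerProductSpace ℝ V] [FiniteDimensional ℝ V]
  {W : Submodule ℝ V} {Pi : W →ₗ[ℝ] W →ₗ[ℝ] ↥Wᗮ} {A : ↥Wᗮ →ₗ[ℝ] W →ₗ[ℝ] W}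

theorem trace_comp_Sop {ι κ : Type*} [Fintype ι] [Fintype κ]
    (eW : OrthonormalBasis ι ℝ ↥W) (eP : OrthonormalBasis κ ℝ ↥Wᗮ) (T : V →ₗ[ℝ] V) (X : W) :
    LinearMap.trace ℝ V (T ∘ₗ Sop W Pi A X) =
      ∑ i, ⟪(eW i : V), T (Pi X (eW i))⟫ - ∑ j, ⟪(eP j : V), T (A (eP j) X)⟫ := by
  rw [Sop, LinearMap.comp_sub, map_sub]
  congr 1
  · exact W.trace_comp_orthogonalProjectionOnto eW (T ∘ₗ Wᗮ.subtype ∘ₗ Pi X)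
  · exact Wᗮ.trace_comp_orthogonalProjectionOnto eP (T ∘ₗ W.subtype ∘ₗ A.flip X)

theorem Sop_apply (Y : W) (Z : V) :
    Sop W Pi A Y Z =
      (Pi Y (W.orthogonalProjectionOnto Z) : V) - (A (Wᗮ.orthogonalProjectionOnto Z) Y : V) :=
  rfl

theorem inner_Sop_apply
    (hWein : ∀ (ξ : ↥Wᗮ) (X Y : W), ⟪(A ξ X : V), (Y : V)⟫ = ⟪(Pi X Y : V), (ξ : V)⟫)
    (Y X : W) (Z : V) :
    ⟪Sop W Pi A Y Z, (X : V)⟫ = -⟪(Pi Y X : V), Z⟫ := by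
  rw [Sop_apply, inner_sub_left, Submodule.inner_left_of_mem_orthogonal X.2 (Pi Y _).2, zero_sub,
    hWein, ← Submodule.coe_inner, Submodule.inner_orthogonalProjectionOnto_eq_of_mem_left]

end SecondFundamentalForm

theorem stmt_6_general {V : Type*} [NormedAddCommGroup V] [InnerProductSpace ℝ V]
    [FiniteDimensional ℝ V] (W : Submodule ℝ V)
    (Pi : W →ₗ[ℝ] W →ₗ[ℝ] ↥Wᗮ) (A : ↥Wᗮ →ₗ[ℝ] W →ₗ[ℝ] W)
    (hsymm : ∀ X Y : W, Pi X Y = Pi Y X)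
    (hWein : ∀ (ξ : ↥Wᗮ) (X Y : W), ⟪((A ξ X : W) : V), (Y : V)⟫ = ⟪((Pi X Y : ↥Wᗮ) : V), (ξ : V)⟫)
    (T : V →ₗ[ℝ] V) (hT : ∀ z z' : V, ⟪T z, z'⟫ = -⟪z, T z'⟫)
    {ι κ : Type*} [Fintype ι] [Fintype κ]
    (eW : OrthonormalBasis ι ℝ ↥W) (eP : OrthonormalBasis κ ℝ ↥Wᗮ)
    (X : W) :
    ⟪STvec W Pi A eW eP T, (X : V)⟫ = LinearMap.trace ℝ V (T ∘ₗ Sop W Pi A X) := by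
  have hskew : ∀ u v : V, -⟪u, T v⟫ = ⟪v, T u⟫ := fun u v => by rw [← hT, real_inner_comm]
  rw [trace_comp_Sop eW eP, STvec, inner_sub_left, sum_inner, sum_inner]
  congr 1
  · refine Finset.sum_congr rfl fun i _ => ?_
    rw [inner_Sop_apply hWein, hsymm, hskew]
  · refine Finset.sum_congr rfl fun j _ => ?_
    rw [inner_Sop_apply hWein, hsymm, ← hWein, ← Submodule.coe_inner,
      Submodule.inner_orthogonalProjectionOnto_eq_of_mem_left, hskew]

/-- For a skew-adjoint `T` with `T(W) ⊆ Wᗮ` and `T(Wᗮ) ⊆ W`, one has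
`⟨S_T, X⟩ = tr (T ∘ S_X)` for every `X ∈ W`. -/
theorem stmt_6 {V : Type*} [NormedAddCommGroup V] [InnerProductSpace ℝ V]
    [FiniteDimensional ℝ V] (W : Submodule ℝ V)
    (Pi : W →ₗ[ℝ] W →ₗ[ℝ] ↥Wᗮ) (A : ↥Wᗮ →ₗ[ℝ] W →ₗ[ℝ] W)
    (hsymm : ∀ X Y : W, Pi X Y = Pi Y X)
    (hWein : ∀ (ξ : ↥Wᗮ) (X Y : W), ⟪((A ξ X : W) : V), (Y : V)⟫ = ⟪((Pi X Y : ↥Wᗮ) : V), (ξ : V)⟫)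
    (T : V →ₗ[ℝ] V) (hT : ∀ z z' : V, ⟪T z, z'⟫ = -⟪z, T z'⟫)
    (hTW : ∀ z ∈ W, T z ∈ Wᗮ) (hTP : ∀ z ∈ Wᗮ, T z ∈ W)
    {ι κ : Type*} [Fintype ι] [Fintype κ]
    (eW : OrthonormalBasis ι ℝ ↥W) (eP : OrthonormalBasis κ ℝ ↥Wᗮ)
    (X : W) :
    ⟪STvec W Pi A eW eP T, (X : V)⟫ = LinearMap.trace ℝ V (T ∘ₗ Sop W Pi A X) :=
  stmt_6_general W Pi A hsymm hWein T hT eW eP X
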